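/- Let Y* ∈ ℝ^{r × dn} with rank(Y*) = d and suppose (Y*)ᵀY* = (R*)ᵀR* where R* ∈ ℝ^{d × dn} has blocks R*_i ∈ SO(d). If Y* = U_d Ξ_d V_dᵀ is a rank-d thin SVD and Ȳ = Ξ_d V_dᵀ ∈ ℝ^{d × dn}, then each d × d block Ȳ_i of Ȳ is an orthogonal matrix, and there exists A ∈ O(d) with Ȳ = A R*. -/

import Mathlib

/-!
Since `Uᵀ U = 1`, the matrix `Ȳ = Ξ Vᵀ` has the same Gram matrix as `Y*`, hence as `R*`. As the
blocks of `R*` are orthogonal, `R* R*ᵀ = n • 1` is invertible, and any `Y` with `Yᵀ Y = Rᵀ R` for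
such an `R` equals `A R` with `A = Y Rᵀ (R Rᵀ)⁻¹`: one checks `Yᵀ A = Rᵀ`, which gives both
`Aᵀ A = 1` and `(Y - A R)ᵀ (Y - A R) = 0`. The blocks of `Ȳ` are then the orthogonal `A R*_i`.
-/

open Matrix

def SOd (d : ℕ) (R : Matrix (Fin d) (Fin d) ℝ) : Prop :=
  Rᵀ * R = 1 ∧ R.det = 1

def blockConcat {r d n : ℕ} (Y : Fin n → Matrix (Fin r) (Fin d) ℝ) :
    Matrix (Fin r) (Fin n × Fin d) ℝ :=
  Matrix.of fun a p => Y p.1 a p.2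

namespace Matrix

variable {m ι : Type*} [Fintype m]

theorem eq_of_transpose_mul_self_eq_zero {A B : Matrix m ι ℝ}
    (h : (A - B)ᵀ * (A - B) = 0) : A = B := by
  rw [← sub_eq_zero, ← conjTranspose_mul_self_eq_zero, conjTranspose_eq_transpose_of_trivial]
  exact h

variable [DecidableEq m]

theorem transpose_mul_self_mul_left {k : Type*} [Fintype k] {U : Matrix k m ℝ}
    (hU : Uᵀ * U = 1) (M : Matrix m ι ℝ) : (U * M)ᵀ * (U * M) = Mᵀ * M := by
  rw [transpose_mul, Matrix.mul_assoc, ← Matrix.mul_assoc Uᵀ, hU, Matrix.one_mul]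

theorem exists_orthogonal_eq_mul_of_transpose_mul_self_eq [Fintype ι] {Y R : Matrix m ι ℝ}
    (hR : IsUnit (R * Rᵀ)) (h : Yᵀ * Y = Rᵀ * R) : ∃ A : Matrix m m ℝ, Aᵀ * A = 1 ∧ Y = A * R := by
  have hdet := (isUnit_iff_isUnit_det _).mp hR
  set A := Y * Rᵀ * (R * Rᵀ)⁻¹
  have hYA : Yᵀ * A = Rᵀ := by
    simp only [A, ← Matrix.mul_assoc, h]
    rw [Matrix.mul_assoc Rᵀ, Matrix.mul_assoc Rᵀ, mul_nonsing_inv _ hdet, Matrix.mul_one]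
  have hAY : Aᵀ * Y = R := by
    simpa only [transpose_mul, transpose_transpose] using congrArg transpose hYA
  have hAA : Aᵀ * A = 1 :=
    calc Aᵀ * A = (R * Rᵀ)⁻¹ᵀ * R * (Yᵀ * A) := by
          simp only [A, transpose_mul, transpose_transpose, Matrix.mul_assoc]
      _ = 1 := by
          rw [hYA, transpose_nonsing_inv, transpose_mul, transpose_transpose, Matrix.mul_assoc,
            nonsing_inv_mul _ hdet]
  refine ⟨A, hAA, eq_of_transpose_mul_self_eq_zero ?_⟩
  rw [transpose_sub, transpose_mul, Matrix.sub_mul, Matrix.mul_sub, Matrix.mul_sub,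
    ← Matrix.mul_assoc Yᵀ A R, hYA, Matrix.mul_assoc Rᵀ Aᵀ Y, hAY, Matrix.mul_assoc Rᵀ Aᵀ,
    ← Matrix.mul_assoc Aᵀ A R, hAA, Matrix.one_mul, h, sub_self]

end Matrix

section blockConcat

variable {r d n : ℕ}

theorem mul_blockConcat {k : ℕ} (A : Matrix (Fin k) (Fin r) ℝ)
    (Y : Fin n → Matrix (Fin r) (Fin d) ℝ) :
    A * blockConcat Y = blockConcat fun i => A * Y i := by
  ext a p
  simp [blockConcat, mul_apply]

theorem blockConcat_mul_transpose (Y : Fin n → Matrix (Fin r) (Fin d) ℝ) :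
    blockConcat Y * (blockConcat Y)ᵀ = ∑ i, Y i * (Y i)ᵀ := by
  ext a b
  simp [blockConcat, mul_apply, Fintype.sum_prod_type, Matrix.sum_apply]

theorem isUnit_blockConcat_mul_transpose {R : Fin n → Matrix (Fin d) (Fin d) ℝ}
    (hn : n ≠ 0) (hR : ∀ i, (R i)ᵀ * R i = 1) :
    IsUnit (blockConcat R * (blockConcat R)ᵀ) := by
  have hsum : blockConcat R * (blockConcat R)ᵀ = algebraMap ℝ _ (n : ℝ) := by
    simp [blockConcat_mul_transpose, fun i => mul_eq_one_comm.mp (hR i)]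
  rw [hsum]
  exact (Nat.cast_ne_zero.mpr hn).isUnit.map _

end blockConcat

theorem stmt13_general {r d n : ℕ}
    (Ystar : Matrix (Fin r) (Fin n × Fin d) ℝ)
    (U : Matrix (Fin r) (Fin d) ℝ) (hU : Uᵀ * U = 1)
    (Xi : Matrix (Fin d) (Fin d) ℝ)
    (V : Matrix (Fin n × Fin d) (Fin d) ℝ)
    (hSVD : Ystar = U * Xi * Vᵀ)
    (Rstar : Fin n → Matrix (Fin d) (Fin d) ℝ) (hRstar : ∀ i, SOd d (Rstar i))
    (hfac : Ystarᵀ * Ystar = (blockConcat Rstar)ᵀ * blockConcat Rstar) :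
    (∀ i : Fin n,
      (Matrix.of fun a b : Fin d => (Xi * Vᵀ) a (i, b))ᵀ *
          (Matrix.of fun a b : Fin d => (Xi * Vᵀ) a (i, b)) =
        (1 : Matrix (Fin d) (Fin d) ℝ)) ∧
    ∃ A : Matrix (Fin d) (Fin d) ℝ, Aᵀ * A = 1 ∧
      Xi * Vᵀ = A * blockConcat Rstar := by
  obtain ⟨A, hA, hY⟩ : ∃ A : Matrix (Fin d) (Fin d) ℝ, Aᵀ * A = 1 ∧
      Xi * Vᵀ = A * blockConcat Rstar := by
    obtain rfl | hn := eq_or_ne n 0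
    · exact ⟨1, by simp, by ext _ ⟨i, _⟩; exact i.elim0⟩
    refine exists_orthogonal_eq_mul_of_transpose_mul_self_eq
      (isUnit_blockConcat_mul_transpose hn fun i => (hRstar i).1) ?_
    rw [← transpose_mul_self_mul_left hU, ← hfac, hSVD, Matrix.mul_assoc]
  refine ⟨fun i => ?_, A, hA, hY⟩
  rw [hY, mul_blockConcat]
  change (A * Rstar i)ᵀ * (A * Rstar i) = 1
  rw [transpose_mul, Matrix.mul_assoc, ← Matrix.mul_assoc Aᵀ, hA, Matrix.one_mul, (hRstar i).1]

/-- if `Y*` has rank `d`, `(Y*)ᵀY* = (R*)ᵀR*` with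
`R* ∈ SO(d)^n`, and `Y* = U Ξ Vᵀ` is a rank-`d` thin SVD, then with
`Ȳ = Ξ Vᵀ`, each `d × d` block of `Ȳ` is orthogonal, and `Ȳ = A R*` for some
`A ∈ O(d)`. -/
theorem stmt13 {r d n : ℕ} (hd : 1 ≤ d)
    (Ystar : Matrix (Fin r) (Fin n × Fin d) ℝ) (hrank : Ystar.rank = d)
    (U : Matrix (Fin r) (Fin d) ℝ) (hU : Uᵀ * U = 1)
    (Xi : Matrix (Fin d) (Fin d) ℝ)
    (hXidiag : ∀ i j : Fin d, i ≠ j → Xi i j = 0)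
    (hXipos : ∀ i : Fin d, 0 < Xi i i)
    (V : Matrix (Fin n × Fin d) (Fin d) ℝ) (hV : Vᵀ * V = 1)
    (hSVD : Ystar = U * Xi * Vᵀ)
    (Rstar : Fin n → Matrix (Fin d) (Fin d) ℝ) (hRstar : ∀ i, SOd d (Rstar i))
    (hfac : Ystarᵀ * Ystar = (blockConcat Rstar)ᵀ * blockConcat Rstar) :
    (∀ i : Fin n,
      (Matrix.of fun a b : Fin d => (Xi * Vᵀ) a (i, b))ᵀ *
          (Matrix.of fun a b : Fin d => (Xi * Vᵀ) a (i, b)) =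
        (1 : Matrix (Fin d) (Fin d) ℝ)) ∧
    ∃ A : Matrix (Fin d) (Fin d) ℝ, Aᵀ * A = 1 ∧
      Xi * Vᵀ = A * blockConcat Rstar :=
  stmt13_general Ystar U hU Xi V hSVD Rstar hRstar hfac
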